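/- For every integer K ≥ 2 there exists ε ∈ (0, 2√2/K) such that for all β > 0: if λ_K(β) ≥ √2 − ε then β ≤ 1/√2. -/

import Mathlib

open MeasureTheory Filter Real

noncomputable section
/-- The semicircle density `μ(x) = (1/π)√(2-x²) 1_{[-√2,√2]}(x)`. -/
def semicircle (x : ℝ) : ℝ :=
  if x ∈ Set.Icc (-Real.sqrt 2) (Real.sqrt 2) then (1 / Real.pi) * Real.sqrt (2 - x ^ 2) else 0


/-- The grid points `x_k = -√2 + 2√2(k-1)/K` (here `k = 0, …, K` zero-based, so that
`xval K 0 = x_1 = -√2` and `xval K K = x_{K+1} = √2`). -/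
def xval (K k : ℕ) : ℝ := -Real.sqrt 2 + 2 * Real.sqrt 2 * k / K

/-- `μ_k = ∫_{x_k}^{x_{k+1}} μ(x) dx` for the semicircle density (zero-based `k`). -/
def muK (K k : ℕ) : ℝ := ∫ x in xval K k..xval K (k + 1), semicircle x

/-- `g_K(λ) = ∑_{k=1}^K μ_k / (λ - x_k)`. -/
def gK (K : ℕ) (l : ℝ) : ℝ := ∑ k : Fin K, muK K k / (l - xval K k)

/-- `h_K(λ) = ∑_{k=1}^K μ_k log(λ - x_k)`. -/
def hKfun (K : ℕ) (l : ℝ) : ℝ := ∑ k : Fin K, muK K k * Real.log (l - xval K k)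

/-- `λ_K(β)`, the unique `λ > x_K` with `g_K(λ) = 2β`.  Since `g_K` is strictly
decreasing from `+∞` to `0` on `(x_K, ∞)`, it is realized here as the infimum of the
set `{λ > x_K : g_K(λ) ≤ 2β}`. -/
def lamK (K : ℕ) (β : ℝ) : ℝ := sInf { l : ℝ | xval K (K - 1) < l ∧ gK K l ≤ 2 * β }

/-- `𝓕_K(β) = β λ_K(β) - 1/2 - (1/2) log(2β) - (1/2) h_K(λ_K(β))`. -/
def FKfun (K : ℕ) (β : ℝ) : ℝ :=
  β * lamK K β - 1 / 2 - (1 / 2) * Real.log (2 * β) - (1 / 2) * hKfun K (lamK K β)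

lemma s_pos : 0 < Real.sqrt 2 := Real.sqrt_pos.mpr (by norm_num)

lemma s_sq : Real.sqrt 2 * Real.sqrt 2 = 2 := Real.mul_self_sqrt (by norm_num)

lemma semicircle_eq (x : ℝ) : semicircle x = (1 / Real.pi) * Real.sqrt (2 - x ^ 2) := by
  unfold semicircle
  split_ifs with h
  · rfl
  · rw [Set.mem_Icc, not_and_or] at h
    have h2 : 2 - x ^ 2 ≤ 0 := by
      rcases h with h | h <;> push_neg at h <;> nlinarith [s_sq, s_pos]
    rw [Real.sqrt_eq_zero'.mpr h2, mul_zero]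

lemma semicircle_cont : Continuous semicircle := by
  have : semicircle = fun x => (1 / Real.pi) * Real.sqrt (2 - x ^ 2) := funext semicircle_eq
  rw [this]
  exact continuous_const.mul (Real.continuous_sqrt.comp (by continuity))

lemma semicircle_nonneg (x : ℝ) : 0 ≤ semicircle x := by
  rw [semicircle_eq]
  positivity

lemma xval_lt {K i j : ℕ} (hK : 0 < K) (h : i < j) : xval K i < xval K j := by
  unfold xval
  have h1 : (i : ℝ) < j := by exact_mod_cast h
  have h2 : (0:ℝ) < K := by exact_mod_cast hK
  have := s_pos
  gcongr

lemma xval_le {K i j : ℕ} (hK : 0 < K) (h : i ≤ j) : xval K i ≤ xval K j := by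
  rcases eq_or_lt_of_le h with rfl | h
  · exact le_refl _
  · exact (xval_lt hK h).le

lemma xval_zero (K : ℕ) : xval K 0 = -Real.sqrt 2 := by simp [xval]

lemma xval_self {K : ℕ} (hK : 0 < K) : xval K K = Real.sqrt 2 := by
  have h2 : (K:ℝ) ≠ 0 := by positivity
  rw [xval, mul_div_assoc, div_self h2]
  ring

lemma xval_pred {K : ℕ} (hK : 2 ≤ K) :
    xval K (K - 1) = Real.sqrt 2 - 2 * Real.sqrt 2 / K := by
  have h2 : (K:ℝ) ≠ 0 := by positivity
  have h3 : ((K - 1 : ℕ) : ℝ) = (K : ℝ) - 1 := by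
    rw [Nat.cast_sub (by omega)]; norm_num
  unfold xval
  rw [h3]
  field_simp
  ring

def psi (x : ℝ) : ℝ :=
  (1 / Real.pi) * Real.sqrt ((Real.sqrt 2 + x) / (Real.sqrt 2 - x))

lemma psi_nonneg (x : ℝ) : 0 ≤ psi x := by unfold psi; positivity

lemma sq_decomp (x : ℝ) : 2 - x ^ 2 = (Real.sqrt 2 - x) * (Real.sqrt 2 + x) := by
  have := s_sq; nlinarith

lemma psi_eq {x : ℝ} (h1 : -Real.sqrt 2 ≤ x) (h2 : x < Real.sqrt 2) :
    Real.sqrt ((Real.sqrt 2 + x) / (Real.sqrt 2 - x))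
      = (Real.sqrt 2 + x) / Real.sqrt (2 - x ^ 2) := by
  have hden : 0 < Real.sqrt 2 - x := by linarith
  rcases eq_or_lt_of_le h1 with rfl | h1'
  · norm_num
  have hnum : 0 < Real.sqrt 2 + x := by linarith
  rw [Real.sqrt_div hnum.le, sq_decomp, Real.sqrt_mul hden.le]
  rw [div_eq_div_iff (Real.sqrt_pos.mpr hden).ne'
    (by positivity : Real.sqrt (Real.sqrt 2 - x) * Real.sqrt (Real.sqrt 2 + x) ≠ 0)]
  have hm : Real.sqrt (Real.sqrt 2 + x) * Real.sqrt (Real.sqrt 2 + x) = Real.sqrt 2 + x :=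
    Real.mul_self_sqrt hnum.le
  linear_combination Real.sqrt (Real.sqrt 2 - x) * hm

-- pointwise bound on interior intervals
lemma semicircle_le_psi {a x : ℝ} (ha : -Real.sqrt 2 ≤ a) (hax : a ≤ x)
    (hx : x < Real.sqrt 2) :
    semicircle x ≤ (Real.sqrt 2 - a) * psi x := by
  rw [semicircle_eq, psi, ← mul_assoc, mul_comm (Real.sqrt 2 - a) (1/Real.pi), mul_assoc]
  have hpi : (0:ℝ) ≤ 1 / Real.pi := by positivity
  apply mul_le_mul_of_nonneg_left _ hpi
  rw [psi_eq (le_trans ha hax) hx]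
  have hden : 0 < Real.sqrt (2 - x ^ 2) ∨ Real.sqrt (2 - x^2) = 0 := by
    rcases eq_or_lt_of_le (Real.sqrt_nonneg (2 - x^2)) with h | h
    · exact Or.inr h.symm
    · exact Or.inl h
  rcases hden with h | h
  · rw [← mul_div_assoc, le_div_iff₀ h]
    have h3 : Real.sqrt (2 - x^2) * Real.sqrt (2 - x^2) = 2 - x^2 := by
      apply Real.mul_self_sqrt
      nlinarith [sq_decomp x, le_trans ha hax]
    nlinarith [sq_decomp x, le_trans ha hax, Real.sqrt_nonneg (2 - x^2)]
  · rw [h]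
    have hnum : 0 ≤ Real.sqrt 2 + x := by have := le_trans ha hax; linarith
    have : 0 ≤ Real.sqrt 2 - a := by linarith
    positivity

lemma psi_contOn {b : ℝ} (hb : b < Real.sqrt 2) :
    ContinuousOn psi (Set.Icc (-Real.sqrt 2) b) := by
  unfold psi
  apply ContinuousOn.mul continuousOn_const
  apply ContinuousOn.sqrt
  apply ContinuousOn.div (by fun_prop) (by fun_prop)
  intro x hx
  have := hx.2
  have : x < Real.sqrt 2 := lt_of_le_of_lt hx.2 hb
  intro h; linarith [sub_eq_zero.mp h]

lemma psi_intervalIntegrable {K k : ℕ} (hK : 2 ≤ K) (hk : k < K - 1) :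
    IntervalIntegrable psi MeasureTheory.volume (xval K k) (xval K (k + 1)) := by
  have hK0 : 0 < K := by omega
  have h1 : xval K k ≤ xval K (k+1) := xval_le hK0 (by omega)
  have h2 : -Real.sqrt 2 ≤ xval K k := by rw [← xval_zero K]; exact xval_le hK0 (by omega)
  have h3 : xval K (k+1) < Real.sqrt 2 := by
    rw [← xval_self hK0]; exact xval_lt hK0 (by omega)
  apply ContinuousOn.intervalIntegrable
  rw [Set.uIcc_of_le h1]
  exact (psi_contOn h3).mono (Set.Icc_subset_Icc h2 (le_refl _))

lemma term_le {K k : ℕ} (hK : 2 ≤ K) (hk : k < K - 1) :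
    muK K k / (Real.sqrt 2 - xval K k) ≤ ∫ x in xval K k..xval K (k + 1), psi x := by
  have hK0 : 0 < K := by omega
  have h1 : xval K k ≤ xval K (k+1) := xval_le hK0 (by omega)
  have h2 : -Real.sqrt 2 ≤ xval K k := by rw [← xval_zero K]; exact xval_le hK0 (by omega)
  have h3 : xval K (k+1) < Real.sqrt 2 := by
    rw [← xval_self hK0]; exact xval_lt hK0 (by omega)
  have hpos : 0 < Real.sqrt 2 - xval K k := by
    have : xval K k < Real.sqrt 2 := lt_of_le_of_lt ((xval_le hK0 (by omega)) : xval K k ≤ xval K (k+1)) h3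
    linarith
  rw [div_le_iff₀ hpos]
  have key : muK K k ≤ ∫ x in xval K k..xval K (k + 1), (Real.sqrt 2 - xval K k) * psi x := by
    unfold muK
    apply intervalIntegral.integral_mono_on h1
    · exact semicircle_cont.intervalIntegrable _ _
    · exact (psi_intervalIntegrable hK hk).const_mul _
    · intro x hx
      exact semicircle_le_psi h2 hx.1 (lt_of_le_of_lt hx.2 h3)
  calc muK K k ≤ _ := key
    _ = (∫ x in xval K k..xval K (k + 1), psi x) * (Real.sqrt 2 - xval K k) := by
        rw [intervalIntegral.integral_const_mul]; ring

lemma sum_le_integral {K : ℕ} (hK : 2 ≤ K) :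
    ∑ k ∈ Finset.range (K - 1), muK K k / (Real.sqrt 2 - xval K k)
      ≤ ∫ x in (-Real.sqrt 2)..(xval K (K - 1)), psi x := by
  have hsum : ∑ k ∈ Finset.range (K - 1), ∫ x in xval K k..xval K (k+1), psi x
      = ∫ x in (xval K 0)..(xval K (K - 1)), psi x := by
    apply intervalIntegral.sum_integral_adjacent_intervals
    intro k hk
    exact psi_intervalIntegrable hK hk
  rw [← xval_zero K, ← hsum]
  apply Finset.sum_le_sum
  intro k hk
  exact term_le hK (Finset.mem_range.mp hk)

/-- antiderivative of `π * psi` -/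
def Fa (x : ℝ) : ℝ := Real.sqrt 2 * Real.arcsin (x / Real.sqrt 2) - Real.sqrt (2 - x ^ 2)

lemma Fa_deriv {x : ℝ} (h1 : -Real.sqrt 2 < x) (h2 : x < Real.sqrt 2) :
    HasDerivAt Fa (Real.pi * psi x) x := by
  have hx2 : 0 < 2 - x ^ 2 := by nlinarith [s_sq]
  have ha : x / Real.sqrt 2 ≠ -1 := by
    have : (-1 : ℝ) < x / Real.sqrt 2 := by
      rw [lt_div_iff₀ s_pos]; linarith
    exact this.ne'
  have hb : x / Real.sqrt 2 ≠ 1 := by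
    have : x / Real.sqrt 2 < 1 := by
      rw [div_lt_one s_pos]; linarith
    exact this.ne
  have d1 : HasDerivAt (fun y : ℝ => Real.arcsin (y / Real.sqrt 2))
      (1 / Real.sqrt (1 - (x / Real.sqrt 2) ^ 2) * (1 / Real.sqrt 2)) x := by
    have := (Real.hasDerivAt_arcsin ha hb).comp x
      ((hasDerivAt_id x).div_const (Real.sqrt 2))
    simpa [Function.comp_def] using this
  have d2 : HasDerivAt (fun y : ℝ => Real.sqrt (2 - y ^ 2))
      (1 / (2 * Real.sqrt (2 - x ^ 2)) * (-(2 * x))) x := by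
    have hinner : HasDerivAt (fun y : ℝ => 2 - y ^ 2) (-(2 * x)) x := by
      have := ((hasDerivAt_pow 2 x).const_sub 2)
      simpa using this
    exact (Real.hasDerivAt_sqrt hx2.ne').comp x hinner
  have d3 : HasDerivAt Fa
      (Real.sqrt 2 * (1 / Real.sqrt (1 - (x / Real.sqrt 2) ^ 2) * (1 / Real.sqrt 2))
        - 1 / (2 * Real.sqrt (2 - x ^ 2)) * (-(2 * x))) x := (d1.const_mul _).sub d2
  convert d3 using 1
  -- algebra: show π * psi x equals that expression
  have e1 : 1 - (x / Real.sqrt 2) ^ 2 = (2 - x ^ 2) / 2 := by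
    rw [div_pow]
    have : Real.sqrt 2 ^ 2 = 2 := by rw [sq]; exact s_sq
    rw [this]; ring
  have e2 : Real.sqrt ((2 - x ^ 2) / 2) = Real.sqrt (2 - x ^ 2) / Real.sqrt 2 :=
    Real.sqrt_div hx2.le 2
  have hsq : 0 < Real.sqrt (2 - x ^ 2) := Real.sqrt_pos.mpr hx2
  rw [psi, psi_eq h1.le h2, e1, e2]
  rw [← mul_assoc, mul_comm Real.pi (1 / Real.pi), one_div_mul_cancel Real.pi_ne_zero, one_mul]
  have h22 : Real.sqrt 2 ^ 2 = 2 := by rw [sq]; exact s_sq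
  field_simp
  linear_combination

lemma Fa_cont : Continuous Fa := by
  unfold Fa
  exact (continuous_const.mul (Real.continuous_arcsin.comp (continuous_id.div_const _))).sub
    (Real.continuous_sqrt.comp (by continuity))

lemma integral_psi {K : ℕ} (hK : 2 ≤ K) :
    ∫ x in (-Real.sqrt 2)..(xval K (K - 1)), psi x
      = (Fa (xval K (K - 1)) + Real.sqrt 2 * (Real.pi / 2)) / Real.pi := by
  have hK0 : 0 < K := by omega
  have hm : xval K (K - 1) < Real.sqrt 2 := by
    rw [← xval_self hK0]; exact xval_lt hK0 (by omega)
  have hm0 : -Real.sqrt 2 ≤ xval K (K - 1) := by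
    rw [← xval_zero K]; exact xval_le hK0 (by omega)
  have hint : IntervalIntegrable (fun x => Real.pi * psi x) MeasureTheory.volume
      (-Real.sqrt 2) (xval K (K - 1)) := by
    apply ContinuousOn.intervalIntegrable
    rw [Set.uIcc_of_le hm0]
    exact continuousOn_const.mul (psi_contOn hm)
  have key : ∫ x in (-Real.sqrt 2)..(xval K (K - 1)), Real.pi * psi x
      = Fa (xval K (K - 1)) - Fa (-Real.sqrt 2) := by
    apply intervalIntegral.integral_eq_sub_of_hasDeriv_right_of_le hm0
      (Fa_cont.continuousOn) _ hint
    intro x hx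
    exact (Fa_deriv hx.1 (lt_of_lt_of_le hx.2 hm.le)).hasDerivWithinAt
  rw [intervalIntegral.integral_const_mul] at key
  have hFa : Fa (-Real.sqrt 2) = -(Real.sqrt 2 * (Real.pi / 2)) := by
    unfold Fa
    have e1 : -Real.sqrt 2 / Real.sqrt 2 = -1 := by
      rw [neg_div, div_self s_pos.ne']
    have e2 : (2 : ℝ) - (-Real.sqrt 2) ^ 2 = 0 := by
      have := s_sq; nlinarith
    rw [e1, e2, Real.arcsin_neg_one, Real.sqrt_zero]
    ring
  rw [hFa] at key
  field_simp at key ⊢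
  linarith [key]

lemma integral_sqrt_edge {K : ℕ} (hK : 2 ≤ K) :
    ∫ x in (xval K (K - 1))..(Real.sqrt 2),
        Real.sqrt (Real.sqrt 2 - x)
      = (2 / 3) * (2 * Real.sqrt 2 / K) * Real.sqrt (2 * Real.sqrt 2 / K) := by
  have hK0 : 0 < K := by omega
  have hm : xval K (K - 1) < Real.sqrt 2 := by
    rw [← xval_self hK0]; exact xval_lt hK0 (by omega)
  set G : ℝ → ℝ := fun t => -((2:ℝ)/3) * ((Real.sqrt 2 - t) * Real.sqrt (Real.sqrt 2 - t))
    with hG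
  have hGc : Continuous G := by
    apply continuous_const.mul
    exact (continuous_const.sub continuous_id).mul
      (Real.continuous_sqrt.comp (continuous_const.sub continuous_id))
  have hcont2 : Continuous (fun x : ℝ => Real.sqrt (Real.sqrt 2 - x)) :=
    Real.continuous_sqrt.comp (continuous_const.sub continuous_id)
  have key : ∫ x in (xval K (K - 1))..(Real.sqrt 2), Real.sqrt (Real.sqrt 2 - x)
      = G (Real.sqrt 2) - G (xval K (K - 1)) := by
    apply intervalIntegral.integral_eq_sub_of_hasDeriv_right_of_le hm.le
      hGc.continuousOn _ (hcont2.intervalIntegrable _ _)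
    intro x hx
    have hx2 : 0 < Real.sqrt 2 - x := by linarith [hx.2]
    have hs : 0 < Real.sqrt (Real.sqrt 2 - x) := Real.sqrt_pos.mpr hx2
    have dsub : HasDerivAt (fun t : ℝ => Real.sqrt 2 - t) (-1) x := by
      simpa using ((hasDerivAt_id x).const_sub (Real.sqrt 2))
    have dsq : HasDerivAt (fun t : ℝ => Real.sqrt (Real.sqrt 2 - t))
        (1 / (2 * Real.sqrt (Real.sqrt 2 - x)) * (-1)) x :=
      (Real.hasDerivAt_sqrt hx2.ne').comp x dsub
    have dmul : HasDerivAt (fun t : ℝ => (Real.sqrt 2 - t) * Real.sqrt (Real.sqrt 2 - t))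
        ((-1) * Real.sqrt (Real.sqrt 2 - x)
          + (Real.sqrt 2 - x) * (1 / (2 * Real.sqrt (Real.sqrt 2 - x)) * (-1))) x :=
      dsub.mul dsq
    have dG : HasDerivAt G (-((2:ℝ)/3) * ((-1) * Real.sqrt (Real.sqrt 2 - x)
          + (Real.sqrt 2 - x) * (1 / (2 * Real.sqrt (Real.sqrt 2 - x)) * (-1)))) x :=
      dmul.const_mul _
    have : -((2:ℝ)/3) * ((-1) * Real.sqrt (Real.sqrt 2 - x)
          + (Real.sqrt 2 - x) * (1 / (2 * Real.sqrt (Real.sqrt 2 - x)) * (-1)))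
        = Real.sqrt (Real.sqrt 2 - x) := by
      have hmm : Real.sqrt (Real.sqrt 2 - x) * Real.sqrt (Real.sqrt 2 - x)
          = Real.sqrt 2 - x := Real.mul_self_sqrt hx2.le
      field_simp
      linarith [hmm]
    rw [this] at dG
    exact dG.hasDerivWithinAt
  rw [key, hG]
  have e1 : Real.sqrt 2 - Real.sqrt 2 = 0 := by ring
  have e2 : Real.sqrt 2 - xval K (K - 1) = 2 * Real.sqrt 2 / K := by
    rw [xval_pred hK]; ring
  simp only [sub_self, Real.sqrt_zero, mul_zero, e2]
  ring

lemma last_term_le {K : ℕ} (hK : 2 ≤ K) :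
    muK K (K - 1) / (Real.sqrt 2 - xval K (K - 1))
      ≤ (2 / (3 * Real.pi)) * Real.sqrt (2 * Real.sqrt 2)
          * Real.sqrt (2 * Real.sqrt 2 / K) := by
  have hK0 : 0 < K := by omega
  set Δ : ℝ := 2 * Real.sqrt 2 / K with hΔ
  have hΔpos : 0 < Δ := by positivity
  have e2 : Real.sqrt 2 - xval K (K - 1) = Δ := by rw [xval_pred hK]; ring
  have hm : xval K (K - 1) < Real.sqrt 2 := by linarith [e2, hΔpos]
  have hm0 : -Real.sqrt 2 ≤ xval K (K - 1) := by
    rw [← xval_zero K]; exact xval_le hK0 (by omega)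
  have hsucc : (K - 1) + 1 = K := by omega
  have hmu : muK K (K - 1) = ∫ x in (xval K (K - 1))..(Real.sqrt 2), semicircle x := by
    unfold muK; rw [hsucc, xval_self hK0]
  have hub : muK K (K - 1)
      ≤ (1 / Real.pi) * Real.sqrt (2 * Real.sqrt 2) * ((2 / 3) * Δ * Real.sqrt Δ) := by
    rw [hmu]
    have step : ∫ x in (xval K (K - 1))..(Real.sqrt 2), semicircle x
        ≤ ∫ x in (xval K (K - 1))..(Real.sqrt 2),
            (1 / Real.pi) * Real.sqrt (2 * Real.sqrt 2) * Real.sqrt (Real.sqrt 2 - x) := by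
      apply intervalIntegral.integral_mono_on hm.le
        (semicircle_cont.intervalIntegrable _ _)
        ((continuous_const.mul
          (Real.continuous_sqrt.comp (continuous_const.sub continuous_id))).intervalIntegrable _ _)
      intro x hx
      show semicircle x ≤ (1 / Real.pi) * Real.sqrt (2 * Real.sqrt 2) * Real.sqrt (Real.sqrt 2 - x)
      rw [semicircle_eq, mul_assoc]
      apply mul_le_mul_of_nonneg_left _ (by positivity : (0:ℝ) ≤ 1 / Real.pi)
      have hx1 : -Real.sqrt 2 ≤ x := le_trans hm0 hx.1
      have hx2 : x ≤ Real.sqrt 2 := hx.2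
      calc Real.sqrt (2 - x ^ 2) = Real.sqrt ((Real.sqrt 2 - x) * (Real.sqrt 2 + x)) := by
            rw [← sq_decomp]
        _ ≤ Real.sqrt ((Real.sqrt 2 - x) * (2 * Real.sqrt 2)) := by
            apply Real.sqrt_le_sqrt
            nlinarith
        _ = Real.sqrt (2 * Real.sqrt 2) * Real.sqrt (Real.sqrt 2 - x) := by
            rw [Real.sqrt_mul (by linarith) (2 * Real.sqrt 2)]; ring
    calc (∫ x in (xval K (K - 1))..(Real.sqrt 2), semicircle x) ≤ _ := step
      _ = (1 / Real.pi) * Real.sqrt (2 * Real.sqrt 2) * ((2 / 3) * Δ * Real.sqrt Δ) := by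
          rw [intervalIntegral.integral_const_mul, integral_sqrt_edge hK]
  rw [e2, div_le_iff₀ hΔpos]
  calc muK K (K - 1) ≤ _ := hub
    _ = 2 / (3 * Real.pi) * Real.sqrt (2 * Real.sqrt 2) * Real.sqrt Δ * Δ := by ring

lemma gK_sqrt2_lt {K : ℕ} (hK : 2 ≤ K) : gK K (Real.sqrt 2) < Real.sqrt 2 := by
  have hK0 : 0 < K := by omega
  set Δ : ℝ := 2 * Real.sqrt 2 / K with hΔ
  have hΔpos : 0 < Δ := by positivity
  set m := K - 1 with hm'
  have hKm : K = m + 1 := by omega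
  have hxm : xval K m = Real.sqrt 2 - Δ := by rw [hm', xval_pred hK]
  have hmlt : xval K m < Real.sqrt 2 := by rw [hxm]; linarith
  have hm0 : -Real.sqrt 2 ≤ xval K m := by
    rw [← xval_zero K]; exact xval_le hK0 (by omega)
  -- split the sum
  have hsplit : gK K (Real.sqrt 2)
      = (∑ k ∈ Finset.range m, muK K k / (Real.sqrt 2 - xval K k))
        + muK K m / (Real.sqrt 2 - xval K m) := by
    unfold gK
    rw [Fin.sum_univ_eq_sum_range (fun k => muK K k / (Real.sqrt 2 - xval K k)) K]
    rw [hKm, Finset.sum_range_succ]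
  rw [hsplit]
  have h1 : ∑ k ∈ Finset.range m, muK K k / (Real.sqrt 2 - xval K k)
      ≤ (Fa (xval K m) + Real.sqrt 2 * (Real.pi / 2)) / Real.pi := by
    rw [← integral_psi hK]
    exact sum_le_integral hK
  have h2 := last_term_le hK
  -- final numeric inequality
  have hfin : (Fa (xval K m) + Real.sqrt 2 * (Real.pi / 2)) / Real.pi
      + (2 / (3 * Real.pi)) * Real.sqrt (2 * Real.sqrt 2) * Real.sqrt Δ
      < Real.sqrt 2 := by
    have hπ : 0 < Real.pi := Real.pi_pos
    rw [div_add' _ _ _ hπ.ne', div_lt_iff₀ hπ]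
    have harc : Real.arcsin (xval K m / Real.sqrt 2) ≤ Real.pi / 2 :=
      Real.arcsin_le_pi_div_two _
    set θ : ℝ := Real.pi / 2 - Real.arcsin (xval K m / Real.sqrt 2) with hθ
    have hθ0 : 0 ≤ θ := sub_nonneg.mpr harc
    have hbounds : -1 ≤ xval K m / Real.sqrt 2 ∧ xval K m / Real.sqrt 2 ≤ 1 := by
      constructor
      · rw [neg_le, ← neg_div]; exact (div_le_one s_pos).mpr (by linarith)
      · exact (div_le_one s_pos).mpr hmlt.le
    have hcos : Real.cos θ = xval K m / Real.sqrt 2 := by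
      rw [hθ, Real.cos_pi_div_two_sub, Real.sin_arcsin hbounds.1 hbounds.2]
    have hval : xval K m / Real.sqrt 2 = 1 - Δ / Real.sqrt 2 := by
      rw [hxm]; field_simp
    have hθsq : Real.sqrt 2 * Δ ≤ θ ^ 2 := by
      have := Real.one_sub_sq_div_two_le_cos (x := θ)
      rw [hcos, hval] at this
      have h2Δ : Δ / Real.sqrt 2 ≤ θ ^ 2 / 2 := by linarith
      have := s_sq
      have hs := s_pos
      rw [div_le_div_iff₀ hs (by norm_num : (0:ℝ) < 2)] at h2Δ
      nlinarith
    have hθge : Real.sqrt (Real.sqrt 2 * Δ) ≤ θ := by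
      calc Real.sqrt (Real.sqrt 2 * Δ) ≤ Real.sqrt (θ ^ 2) := Real.sqrt_le_sqrt hθsq
        _ = θ := Real.sqrt_sq hθ0
    have hq : Real.sqrt 2 * Real.sqrt (Real.sqrt 2 * Δ)
        = Real.sqrt (2 * Real.sqrt 2) * Real.sqrt Δ := by
      rw [← Real.sqrt_mul (by norm_num : (0:ℝ) ≤ 2),
        ← Real.sqrt_mul (by positivity : (0:ℝ) ≤ 2 * Real.sqrt 2), mul_assoc]
    have hqpos : 0 < Real.sqrt (2 * Real.sqrt 2) * Real.sqrt Δ := by positivity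
    have hFa : Fa (xval K m) = Real.sqrt 2 * (Real.pi / 2) - Real.sqrt 2 * θ
        - Real.sqrt (2 - xval K m ^ 2) := by
      unfold Fa; rw [hθ]; ring
    have hsqnn : 0 ≤ Real.sqrt (2 - xval K m ^ 2) := Real.sqrt_nonneg _
    have hsθ : Real.sqrt (2 * Real.sqrt 2) * Real.sqrt Δ ≤ Real.sqrt 2 * θ := by
      rw [← hq]
      exact mul_le_mul_of_nonneg_left hθge s_pos.le
    have hc : 2 / (3 * Real.pi) * Real.sqrt (2 * Real.sqrt 2) * Real.sqrt Δ * Real.pi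
        = 2 / 3 * (Real.sqrt (2 * Real.sqrt 2) * Real.sqrt Δ) := by
      field_simp
    rw [hFa, hc]
    clear_value θ Δ
    linarith
  calc (∑ k ∈ Finset.range m, muK K k / (Real.sqrt 2 - xval K k))
        + muK K m / (Real.sqrt 2 - xval K m)
      ≤ (Fa (xval K m) + Real.sqrt 2 * (Real.pi / 2)) / Real.pi
        + (2 / (3 * Real.pi)) * Real.sqrt (2 * Real.sqrt 2) * Real.sqrt Δ := by
        exact add_le_add h1 h2
    _ < Real.sqrt 2 := hfin

lemma gK_continuousAt {K : ℕ} (hK : 2 ≤ K) : ContinuousAt (gK K) (Real.sqrt 2) := by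
  have hK0 : 0 < K := by omega
  unfold gK ContinuousAt
  apply tendsto_finset_sum
  intro k _
  have hk : xval K k < Real.sqrt 2 := by
    rw [← xval_self hK0]; exact xval_lt hK0 k.isLt
  have hne : Real.sqrt 2 - xval K k ≠ 0 := by
    intro h; rw [sub_eq_zero] at h; exact hk.ne' h
  exact (continuousAt_const.div ((continuous_id.sub continuous_const).continuousAt) hne)

theorem lamK_large_implies_high_temperature (K : ℕ) (hK : 2 ≤ K) :
    ∃ ε : ℝ, 0 < ε ∧ ε < 2 * Real.sqrt 2 / K ∧
      ∀ β : ℝ, 0 < β → Real.sqrt 2 - ε ≤ lamK K β → β ≤ 1 / Real.sqrt 2 := by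
  have hK0 : 0 < K := by omega
  have hΔpos : 0 < 2 * Real.sqrt 2 / K := by positivity
  set Δ : ℝ := 2 * Real.sqrt 2 / K with hΔ
  have hlt := gK_sqrt2_lt hK
  have hnhds : (gK K) ⁻¹' (Set.Iio (Real.sqrt 2)) ∈ nhds (Real.sqrt 2) :=
    (gK_continuousAt hK).preimage_mem_nhds (Iio_mem_nhds hlt)
  obtain ⟨δ, hδpos, hball⟩ := Metric.mem_nhds_iff.mp hnhds
  refine ⟨min δ Δ / 4, by positivity, ?_, ?_⟩
  · calc min δ Δ / 4 ≤ Δ / 4 := by gcongr; exact min_le_right _ _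
      _ < Δ := by linarith
  · intro β hβ hlam
    by_contra hcon
    push_neg at hcon
    set ε : ℝ := min δ Δ / 4 with hε
    have hεpos : 0 < ε := by positivity
    have hεδ : 2 * ε < δ := by
      have : min δ Δ ≤ δ := min_le_left _ _
      rw [hε]; linarith
    have h2εΔ : 2 * ε < Δ := by
      have : min δ Δ ≤ Δ := min_le_right _ _
      rw [hε]; linarith
    set l : ℝ := Real.sqrt 2 - 2 * ε with hl
    have hball' : gK K l < Real.sqrt 2 := by
      have : l ∈ Metric.ball (Real.sqrt 2) δ := by
        rw [Metric.mem_ball, Real.dist_eq, hl]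
        rw [show Real.sqrt 2 - 2 * ε - Real.sqrt 2 = -(2 * ε) by ring, abs_neg,
          abs_of_pos (by linarith)]
        exact hεδ
      exact hball this
    have h2β : Real.sqrt 2 < 2 * β := by
      have h1 : 2 * (1 / Real.sqrt 2) < 2 * β := by linarith
      have h2 : 2 * (1 / Real.sqrt 2) = Real.sqrt 2 := by
        rw [mul_one_div, eq_comm, eq_div_iff s_pos.ne']
        exact s_sq
      linarith
    have hxm : xval K (K - 1) = Real.sqrt 2 - Δ := by rw [xval_pred hK]
    have hmem : l ∈ { x : ℝ | xval K (K - 1) < x ∧ gK K x ≤ 2 * β } := by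
      constructor
      · rw [hxm, hl]; linarith
      · exact (hball'.trans h2β).le
    have hbdd : BddBelow { x : ℝ | xval K (K - 1) < x ∧ gK K x ≤ 2 * β } :=
      ⟨xval K (K - 1), fun y hy => hy.1.le⟩
    have hle : lamK K β ≤ l := csInf_le hbdd hmem
    rw [hl] at hle
    linarith


end
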